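/- Under hypothesis (I), every plane of PG(4,q) (q even) through the unique red point contains exactly q+1 black points. -/

import Mathlib

open Submodule Set

/-- Points of `PG(4,q)`: one-dimensional subspaces of `F^5`. -/
abbrev PGPoint (F : Type*) [Field F] := {W : Submodule F (Fin 5 → F) // Module.finrank F W = 1}
/-- Lines of `PG(4,q)`: two-dimensional subspaces of `F^5`. -/
abbrev PGLine (F : Type*) [Field F] := {W : Submodule F (Fin 5 → F) // Module.finrank F W = 2}
/-- Planes of `PG(4,q)`: three-dimensional subspaces of `F^5`. -/
abbrev PGPlane (F : Type*) [Field F] := {W : Submodule F (Fin 5 → F) // Module.finrank F W = 3}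
/-- Solids (hyperplanes) of `PG(4,q)`: four-dimensional subspaces of `F^5`. -/
abbrev PGSolid (F : Type*) [Field F] := {W : Submodule F (Fin 5 → F) // Module.finrank F W = 4}

variable {F : Type*} [Field F]

/-- The solids of `H` through the point `P`. -/
def solidsThrough (H : Set (PGSolid F)) (P : PGPoint F) : Set (PGSolid F) :=
  {S ∈ H | P.1 ≤ S.1}

/-- Hypothesis (I): every point lies on `0`, `q^3/2` or `(q^3+q^2)/2` solids of `H`. -/
def CondI (q : ℕ) (H : Set (PGSolid F)) : Prop :=
  ∀ P : PGPoint F,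
    (solidsThrough H P).ncard = 0 ∨
    2 * (solidsThrough H P).ncard = q ^ 3 ∨
    2 * (solidsThrough H P).ncard = q ^ 3 + q ^ 2

/-- A red point: lies on no solid of `H`. -/
def Red (H : Set (PGSolid F)) (P : PGPoint F) : Prop := (solidsThrough H P).ncard = 0

/-- A white point: lies on `q^3/2` solids of `H`. -/
def White (q : ℕ) (H : Set (PGSolid F)) (P : PGPoint F) : Prop :=
  2 * (solidsThrough H P).ncard = q ^ 3

/-- A black point: lies on `(q^3+q^2)/2` solids of `H`. -/
def Black (q : ℕ) (H : Set (PGSolid F)) (P : PGPoint F) : Prop :=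
  2 * (solidsThrough H P).ncard = q ^ 3 + q ^ 2

/-- The black points contained in a subspace `W`. -/
def blackIn (q : ℕ) (H : Set (PGSolid F)) (W : Submodule F (Fin 5 → F)) : Set (PGPoint F) :=
  {P : PGPoint F | Black q H P ∧ P.1 ≤ W}

/-!
Let `n(P)` be the number of solids of `H` through `P` and `c = |H|`. Condition (I) gives, point by
point, `2n + q³[red] = q³ + q²[black]` and `4n² + q⁶[red] = q⁶ + (2q⁵ + q⁴)[black]`. Summed over
the points of a subspace `W`, with `∑_{P ∈ W} n(P) = ∑_{S ∈ H} |W ∩ S|`, these become linear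
relations between `c` and the numbers of red and black points of `W`.

A line through two red points and a solid of `H` give incompatible bounds on `c`, so the red point
`R` is unique. A line through `R` with `k` black points then gives `2c = q⁴ + kq²`, and the two
moment equations over the whole space force `(k - 1)((q² + q + 1)k - q³) = 0`; as
`q² + q + 1 ∤ q³`, `k = 1` and `2c = q⁴ + q²`. For a plane through `R` the first relation now
leaves exactly `q + 1` black points.
-/

open Module Finset

section Subspaces

variable {V : Type*} [AddCommGroup V] [Module F V]

def pointsLeEquiv (W : Submodule F V) :
    {P : {P : Submodule F V // finrank F P = 1} // P.1 ≤ W} ≃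
      {Q : Submodule F W // finrank F Q = 1} where
  toFun P := ⟨P.1.1.comap W.subtype, by
    rw [← Submodule.finrank_map_subtype_eq, Submodule.map_comap_subtype, inf_of_le_right P.2,
      P.1.2]⟩
  invFun Q := ⟨⟨Q.1.map W.subtype, by rw [Submodule.finrank_map_subtype_eq, Q.2]⟩,
    Submodule.map_subtype_le W _⟩
  left_inv P := by
    ext1; ext1
    simp only [Submodule.map_comap_subtype, inf_of_le_right P.2]
  right_inv Q := by
    ext1
    exact Submodule.comap_map_eq_of_injective W.injective_subtype Q.1

theorem card_points_le_eq_sum_pow [Fintype F] (W : Submodule F V) :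
    Nat.card {P : {P : Submodule F V // finrank F P = 1} // P.1 ≤ W} =
      ∑ i ∈ range (finrank F W), Fintype.card F ^ i := by
  rw [Nat.card_congr ((pointsLeEquiv W).trans (Projectivization.equivSubmodule F W).symm),
    Projectivization.card_of_finrank F W rfl, Nat.card_eq_fintype_card]

theorem finrank_inf_add_one_of_not_le [FiniteDimensional F V] {W S : Submodule F V}
    (hS : finrank F S + 1 = finrank F V) (h : ¬ W ≤ S) :
    finrank F ↥(W ⊓ S) + 1 = finrank F W := by
  have hlt : S < W ⊔ S := right_lt_sup.2 h
  have := Submodule.finrank_lt_finrank_of_lt hlt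
  have := (W ⊔ S).finrank_le
  have := Submodule.finrank_sup_add_finrank_inf_eq W S
  omega

theorem finrank_sup_eq_two {P R : Submodule F V} (hP : finrank F P = 1) (hR : finrank F R = 1)
    (h : P ≠ R) : finrank F ↥(P ⊔ R) = 2 := by
  have : FiniteDimensional F P := Module.finite_of_finrank_eq_succ hP
  have : FiniteDimensional F R := Module.finite_of_finrank_eq_succ hR
  have : finrank F ↥(P ⊓ R) < finrank F P :=
    Submodule.finrank_lt_finrank_of_lt <| inf_lt_left.2 fun hle =>
      h (Submodule.eq_of_le_of_finrank_eq hle (hP.trans hR.symm))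
  have := Submodule.finrank_sup_add_finrank_inf_eq P R
  omega

end Subspaces

theorem Finset.sum_add_mul_card_filter_eq {ι : Type*} (T : Finset ι) (f : ι → ℕ)
    (p r : ι → Prop) [DecidablePred p] [DecidablePred r] (a b c : ℕ)
    (h : ∀ i, f i + a * (if p i then 1 else 0) = b + c * (if r i then 1 else 0)) :
    ∑ i ∈ T, f i + a * #{i ∈ T | p i} = b * #T + c * #{i ∈ T | r i} := by
  simp_rw [card_filter, mul_sum, ← sum_add_distrib, h, sum_add_distrib, sum_const, smul_eq_mul,
    mul_comm]

theorem Finset.card_filter_eq_one_of_unique {ι : Type*} {p : ι → Prop} [DecidablePred p]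
    {T : Finset ι} {a : ι} (ha : a ∈ T) (hpa : p a) (huniq : ∀ b, p b → b = a) :
    #{b ∈ T | p b} = 1 :=
  card_eq_one.2 ⟨a, eq_singleton_iff_unique_mem.2
    ⟨mem_filter.2 ⟨ha, hpa⟩, fun b hb => huniq b (mem_filter.1 hb).2⟩⟩

theorem sq_add_add_one_not_dvd_pow_three {q : ℕ} (hq : 0 < q) : ¬ q ^ 2 + q + 1 ∣ q ^ 3 := by
  obtain ⟨m, rfl⟩ : ∃ m, q = m + 1 := ⟨q - 1, by omega⟩
  have hcube : (m + 1) ^ 3 = m * ((m + 1) ^ 2 + (m + 1) + 1) + 1 := by ring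
  rw [hcube, Nat.dvd_add_right (dvd_mul_left _ m)]
  intro h
  have := Nat.le_of_dvd one_pos h
  nlinarith

open scoped Classical

section PG

variable [Fintype F]

local notation "q" => Fintype.card F

noncomputable instance : Fintype (PGPoint F) := Fintype.ofFinite _

noncomputable instance : Fintype (PGSolid F) := Fintype.ofFinite _

noncomputable def pointsIn (W : Submodule F (Fin 5 → F)) : Finset (PGPoint F) := {P | P.1 ≤ W}

theorem card_pointsIn_of_finrank_eq {W : Submodule F (Fin 5 → F)} {d : ℕ} (hW : finrank F W = d) :
    #(pointsIn W) = ∑ i ∈ range d, q ^ i := by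
  rw [pointsIn, ← Fintype.card_subtype, ← Nat.card_eq_fintype_card, card_points_le_eq_sum_pow, hW]

theorem filter_pointsIn_le (W S : Submodule F (Fin 5 → F)) :
    {P ∈ pointsIn W | P.1 ≤ S} = pointsIn (W ⊓ S) := by
  ext P
  simp [pointsIn, le_inf_iff]

theorem pointsIn_top : pointsIn (⊤ : Submodule F (Fin 5 → F)) = Finset.univ := by
  ext P
  simp [pointsIn]

variable {H : Set (PGSolid F)}

theorem ncard_solidsThrough (P : PGPoint F) :
    (solidsThrough H P).ncard = #{S ∈ H.toFinset | P.1 ≤ S.1} := by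
  rw [← Set.ncard_coe_finset]
  congr 1
  ext S
  simp [solidsThrough]

theorem sum_ncard_solidsThrough (T : Finset (PGPoint F)) :
    ∑ P ∈ T, (solidsThrough H P).ncard = ∑ S ∈ H.toFinset, #{P ∈ T | P.1 ≤ S.1} := by
  simp_rw [ncard_solidsThrough, card_filter]
  exact sum_comm

theorem sum_ncard_pointsIn_eq_mul {W : Submodule F (Fin 5 → F)} {m : ℕ}
    (hm : ∀ S ∈ H, #(pointsIn (W ⊓ S.1)) = m) :
    ∑ P ∈ pointsIn W, (solidsThrough H P).ncard = #H.toFinset * m := by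
  rw [sum_ncard_solidsThrough, ← smul_eq_mul, ← sum_const]
  refine sum_congr rfl fun S hS => ?_
  rw [filter_pointsIn_le, hm S (Set.mem_toFinset.1 hS)]

theorem sum_sq_ncard_solidsThrough :
    ∑ P, (solidsThrough H P).ncard ^ 2 =
      ∑ S ∈ H.toFinset, ∑ T ∈ H.toFinset, #(pointsIn (S.1 ⊓ T.1)) := by
  have hcard (S T : PGSolid F) : #(pointsIn (S.1 ⊓ T.1)) =
      ∑ P : PGPoint F, (if P.1 ≤ S.1 then 1 else 0) * (if P.1 ≤ T.1 then 1 else 0) := by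
    simp_rw [← filter_pointsIn_le, pointsIn, filter_filter, card_filter, ite_zero_mul_ite_zero,
      mul_one]
  simp_rw [hcard, sq, ncard_solidsThrough, card_filter, sum_mul_sum]
  rw [sum_comm]
  exact sum_congr rfl fun S _ => sum_comm

theorem Red.not_le {R : PGPoint F} (hR : Red H R) {S : PGSolid F} (hS : S ∈ H) :
    ¬ R.1 ≤ S.1 := fun hle => by
  have : solidsThrough H R = ∅ := (Set.ncard_eq_zero (Set.toFinite _)).1 hR
  exact this.subset (show S ∈ solidsThrough H R from ⟨hS, hle⟩)

theorem sum_ncard_pointsIn_of_red_le {R : PGPoint F} (hR : Red H R)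
    {W : Submodule F (Fin 5 → F)} (hRW : R.1 ≤ W) {d : ℕ} (hW : finrank F W = d + 1) :
    ∑ P ∈ pointsIn W, (solidsThrough H P).ncard = #H.toFinset * ∑ i ∈ range d, q ^ i := by
  refine sum_ncard_pointsIn_eq_mul fun S hS => card_pointsIn_of_finrank_eq ?_
  have := finrank_inf_add_one_of_not_le (by rw [S.2, finrank_fin_fun])
    fun hWS => hR.not_le hS (hRW.trans hWS)
  omega

theorem card_pointsIn_inf_solid (S T : PGSolid F) :
    #(pointsIn (S.1 ⊓ T.1)) = q ^ 2 + q + 1 + if S = T then q ^ 3 else 0 := by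
  split_ifs with h
  · rw [h, inf_idem, card_pointsIn_of_finrank_eq T.2]
    simp only [sum_range_succ, sum_range_zero]
    ring
  · have hST : ¬ S.1 ≤ T.1 := fun hle =>
      h (Subtype.ext (Submodule.eq_of_le_of_finrank_eq hle (S.2.trans T.2.symm)))
    have := finrank_inf_add_one_of_not_le (by rw [T.2, finrank_fin_fun]) hST
    rw [card_pointsIn_of_finrank_eq (d := 3) (by rw [S.2] at this; omega)]
    simp only [sum_range_succ, sum_range_zero]
    ring

theorem sum_card_pointsIn_inf_solid {S : PGSolid F} (hS : S ∈ H) :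
    ∑ T ∈ H.toFinset, #(pointsIn (S.1 ⊓ T.1)) = q ^ 3 + #H.toFinset * (q ^ 2 + q + 1) := by
  simp_rw [card_pointsIn_inf_solid, sum_add_distrib, sum_const, smul_eq_mul,
    sum_ite_eq, Set.mem_toFinset, if_pos hS]
  ring

theorem sum_ncard_pointsIn_solid {S : PGSolid F} (hS : S ∈ H) :
    ∑ P ∈ pointsIn S.1, (solidsThrough H P).ncard = q ^ 3 + #H.toFinset * (q ^ 2 + q + 1) := by
  simp_rw [sum_ncard_solidsThrough, filter_pointsIn_le]
  exact sum_card_pointsIn_inf_solid hS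

theorem sum_univ_sq_ncard_solidsThrough :
    ∑ P, (solidsThrough H P).ncard ^ 2 = #H.toFinset * (q ^ 3 + #H.toFinset * (q ^ 2 + q + 1)) := by
  rw [sum_sq_ncard_solidsThrough, sum_congr rfl fun S hS =>
    sum_card_pointsIn_inf_solid (Set.mem_toFinset.1 hS), sum_const, smul_eq_mul]

theorem card_univ_pgPoint : #(Finset.univ : Finset (PGPoint F)) = ∑ i ∈ range 5, q ^ i := by
  rw [← pointsIn_top, card_pointsIn_of_finrank_eq (by rw [finrank_top, finrank_fin_fun])]

theorem sum_univ_ncard_solidsThrough :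
    ∑ P, (solidsThrough H P).ncard = #H.toFinset * ∑ i ∈ range 4, q ^ i := by
  rw [← pointsIn_top]
  exact sum_ncard_pointsIn_eq_mul fun S _ => by rw [top_inf_eq, card_pointsIn_of_finrank_eq S.2]

theorem CondI.two_mul_ncard_add (hI : CondI q H) (P : PGPoint F) :
    2 * (solidsThrough H P).ncard + q ^ 3 * (if Red H P then 1 else 0) =
      q ^ 3 + q ^ 2 * (if Black q H P then 1 else 0) := by
  have : 0 < q ^ 2 := by positivity
  have : 0 < q ^ 3 := by positivity
  unfold Red Black
  rcases hI P with h | h | h <;> split_ifs <;> omega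

theorem CondI.four_mul_sq_ncard_add (hI : CondI q H) (P : PGPoint F) :
    4 * (solidsThrough H P).ncard ^ 2 + q ^ 6 * (if Red H P then 1 else 0) =
      q ^ 6 + (2 * q ^ 5 + q ^ 4) * (if Black q H P then 1 else 0) := by
  have : 0 < q ^ 2 := by positivity
  have : 0 < q ^ 3 := by positivity
  unfold Red Black
  rcases hI P with h | h | h <;> generalize (solidsThrough H P).ncard = m at h ⊢
  · rw [if_pos h, if_neg (by omega), h]
    ring
  · rw [if_neg (by omega), if_neg (by omega)]
    linear_combination (2 * m + q ^ 3) * h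
  · rw [if_neg (by omega), if_pos h]
    linear_combination (2 * m + q ^ 3 + q ^ 2) * h

theorem CondI.two_mul_sum_ncard_add (hI : CondI q H) (T : Finset (PGPoint F)) :
    2 * ∑ P ∈ T, (solidsThrough H P).ncard + q ^ 3 * #{P ∈ T | Red H P} =
      q ^ 3 * #T + q ^ 2 * #{P ∈ T | Black q H P} := by
  rw [mul_sum]
  exact sum_add_mul_card_filter_eq T _ _ _ _ _ _ hI.two_mul_ncard_add

theorem CondI.four_mul_sum_sq_ncard_add (hI : CondI q H) (T : Finset (PGPoint F)) :
    4 * ∑ P ∈ T, (solidsThrough H P).ncard ^ 2 + q ^ 6 * #{P ∈ T | Red H P} =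
      q ^ 6 * #T + (2 * q ^ 5 + q ^ 4) * #{P ∈ T | Black q H P} := by
  rw [mul_sum]
  exact sum_add_mul_card_filter_eq T _ _ _ _ _ _ hI.four_mul_sq_ncard_add

theorem card_filter_red_add_card_filter_black_le (T : Finset (PGPoint F)) :
    #{P ∈ T | Red H P} + #{P ∈ T | Black q H P} ≤ #T := by
  have hsub : {P ∈ T | Black q H P} ⊆ {P ∈ T | ¬ Red H P} :=
    monotone_filter_right T fun P _ hB hR => by
      unfold Red Black at *
      have : 0 < q ^ 3 := by positivity
      omega
  have := card_filter_add_card_filter_not (s := T) (fun P => Red H P)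
  have := Finset.card_le_card hsub
  omega

theorem CondI.two_mul_card_add_of_line (hI : CondI q H) {R : PGPoint F} (hR : Red H R)
    {L : Submodule F (Fin 5 → F)} (hL : finrank F L = 2) (hRL : R.1 ≤ L) :
    2 * #H.toFinset + q ^ 3 * #{P ∈ pointsIn L | Red H P} =
      q ^ 3 * (q + 1) + q ^ 2 * #{P ∈ pointsIn L | Black q H P} := by
  have h := hI.two_mul_sum_ncard_add (pointsIn L)
  rwa [sum_ncard_pointsIn_of_red_le hR hRL hL, card_pointsIn_of_finrank_eq hL, sum_range_one,
    pow_zero, mul_one, sum_range_succ, sum_range_one, pow_zero, pow_one, add_comm 1 q] at h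

theorem CondI.two_mul_card_add_of_mem (hI : CondI q H) {S : PGSolid F} (hS : S ∈ H) :
    2 * (q ^ 3 + #H.toFinset * (q ^ 2 + q + 1)) =
      q ^ 3 * (q ^ 3 + q ^ 2 + q + 1) + q ^ 2 * #{P ∈ pointsIn S.1 | Black q H P} := by
  have h := hI.two_mul_sum_ncard_add (pointsIn S.1)
  have hnored : #{P ∈ pointsIn S.1 | Red H P} = 0 := card_eq_zero.2 <| filter_eq_empty_iff.2
    fun P hP hPred => hPred.not_le hS (by simpa [pointsIn] using hP)
  rw [sum_ncard_pointsIn_solid hS, card_pointsIn_of_finrank_eq S.2, hnored] at h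
  simp only [sum_range_succ, sum_range_zero] at h
  linarith

theorem red_unique (hne : H.Nonempty) (hI : CondI q H) {R P : PGPoint F} (hR : Red H R)
    (hP : Red H P) : P = R := by
  by_contra hPR
  obtain ⟨S, hS⟩ := hne
  set L := P.1 ⊔ R.1
  have hL : finrank F L = 2 := finrank_sup_eq_two P.2 R.2 (Subtype.coe_injective.ne hPR)
  have hline := hI.two_mul_card_add_of_line hR hL le_sup_right
  have hred : 2 ≤ #{Q ∈ pointsIn L | Red H Q} :=
    (card_pair hPR).symm.le.trans <|
      Finset.card_le_card (by simp [Finset.insert_subset_iff, pointsIn, L, hP, hR])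
  have hle := card_filter_red_add_card_filter_black_le (H := H) (pointsIn L)
  rw [card_pointsIn_of_finrank_eq hL, sum_range_succ, sum_range_one, pow_zero, pow_one] at hle
  have hsolid := hI.two_mul_card_add_of_mem hS
  generalize #H.toFinset = c at hline hsolid
  generalize #{Q ∈ pointsIn L | Red H Q} = r at hred hline hle
  generalize #{Q ∈ pointsIn L | Black q H Q} = k at hline hle
  generalize #{Q ∈ pointsIn S.1 | Black q H Q} = kS at hsolid
  have hq : 1 ≤ q := Fintype.card_pos
  zify at *
  have hc : 2 * (c : ℤ) ≤ (q - 1) * (q ^ 3 + q ^ 2) := by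
    nlinarith [mul_nonneg (sub_nonneg.2 hle) (sq_nonneg (q : ℤ)),
      mul_nonneg (sub_nonneg.2 hred) (by positivity : (0 : ℤ) ≤ q ^ 3 + q ^ 2)]
  nlinarith [mul_le_mul_of_nonneg_right hc (by positivity : (0 : ℤ) ≤ q ^ 2 + q + 1),
    mul_nonneg (sq_nonneg (q : ℤ)) (Int.natCast_nonneg kS), pow_pos (by omega : (0 : ℤ) < q) 4]

theorem two_mul_card_toFinset_eq (hne : H.Nonempty) (hI : CondI q H) {R : PGPoint F}
    (hR : Red H R) : 2 * #H.toFinset = q ^ 4 + q ^ 2 := by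
  have huniq : ∀ P, Red H P → P = R := fun P hP => red_unique hne hI hR hP
  obtain ⟨S, hS⟩ := hne
  obtain ⟨P, hP⟩ : (pointsIn S.1).Nonempty :=
    card_pos.1 (by rw [card_pointsIn_of_finrank_eq S.2]; positivity)
  have hPR : P ≠ R := fun h => hR.not_le hS (h ▸ by simpa [pointsIn] using hP)
  set L := P.1 ⊔ R.1
  have hL : finrank F L = 2 := finrank_sup_eq_two P.2 R.2 (Subtype.coe_injective.ne hPR)
  have hline := hI.two_mul_card_add_of_line hR hL le_sup_right
  rw [card_filter_eq_one_of_unique (by simp [pointsIn, L]) hR huniq] at hline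
  have hfirst := hI.two_mul_sum_ncard_add Finset.univ
  rw [sum_univ_ncard_solidsThrough, card_univ_pgPoint,
    card_filter_eq_one_of_unique (mem_univ R) hR huniq] at hfirst
  have hsecond := hI.four_mul_sum_sq_ncard_add Finset.univ
  rw [sum_univ_sq_ncard_solidsThrough, card_univ_pgPoint,
    card_filter_eq_one_of_unique (mem_univ R) hR huniq] at hsecond
  simp only [sum_range_succ, sum_range_zero, zero_add, pow_zero, pow_one] at hfirst hsecond
  generalize #H.toFinset = c at *
  generalize #{Q ∈ pointsIn L | Black q H Q} = k at hline
  generalize #{Q | Black q H Q} = B at hfirst hsecond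
  have hq : 0 < q := Fintype.card_pos
  have hk : k = 1 := by
    zify at hline hfirst hsecond ⊢
    -- eliminate `B` between the two moment equations, then substitute `2c = q⁴ + q²k`
    have key : (q : ℤ) ^ 4 * ((k - 1) * ((q ^ 2 + q + 1) * k - q ^ 3)) = 0 := by
      linear_combination hsecond - (2 * (q : ℤ) ^ 3 + q ^ 2) * hfirst
        - ((q ^ 2 + q + 1) * (2 * c + q ^ 4 + q ^ 2 * k) + 2 * q ^ 3
          - (2 * q ^ 3 + q ^ 2) * (1 + q + q ^ 2 + q ^ 3)) * hline
    have hfactor : ((q : ℤ) ^ 2 + q + 1) * k - q ^ 3 ≠ 0 := fun h =>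
      sq_add_add_one_not_dvd_pow_three hq ⟨k, by exact_mod_cast (sub_eq_zero.1 h).symm⟩
    simpa [hq.ne', hfactor, sub_eq_zero] using key
  subst hk
  linarith

theorem card_filter_black_pointsIn_plane (hne : H.Nonempty) (hI : CondI q H) {R : PGPoint F}
    (hR : Red H R) {π : PGPlane F} (hRπ : R.1 ≤ π.1) :
    #{P ∈ pointsIn π.1 | Black q H P} = q + 1 := by
  have hplane := hI.two_mul_sum_ncard_add (pointsIn π.1)
  rw [sum_ncard_pointsIn_of_red_le hR hRπ π.2, card_pointsIn_of_finrank_eq π.2,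
    card_filter_eq_one_of_unique (by simpa [pointsIn] using hRπ) hR
      fun P hP => red_unique hne hI hR hP] at hplane
  have hc := two_mul_card_toFinset_eq hne hI hR
  simp only [sum_range_succ, sum_range_zero, zero_add, pow_zero, pow_one] at hplane
  have hq : 0 < q := Fintype.card_pos
  have : (q : ℤ) ^ 2 * #{P ∈ pointsIn π.1 | Black q H P} = q ^ 2 * (q + 1) := by
    zify at hplane hc
    linear_combination (1 + (q : ℤ)) * hc - hplane
  exact_mod_cast mul_left_cancel₀ (by positivity) this

theorem ncard_blackIn (n : ℕ) (W : Submodule F (Fin 5 → F)) :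
    (blackIn n H W).ncard = #{P ∈ pointsIn W | Black n H P} := by
  rw [← Set.ncard_coe_finset]
  congr 1
  ext P
  simp [blackIn, pointsIn, and_comm]

end PG

theorem stmt6_general (q : ℕ)
    (F : Type*) [Field F] [Fintype F] (hcard : Fintype.card F = q)
    (H : Set (PGSolid F)) (hne : H.Nonempty) (hI : CondI q H)
    (R : PGPoint F) (hR : Red H R) :
    ∀ π : PGPlane F, R.1 ≤ π.1 → (blackIn q H π.1).ncard = q + 1 := by
  subst hcard
  intro π hπ
  rw [ncard_blackIn]
  exact card_filter_black_pointsIn_plane hne hI hR hπ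

theorem stmt6 (q : ℕ) (hq : ∃ n : ℕ, 0 < n ∧ q = 2 ^ n)
    (F : Type*) [Field F] [Fintype F] (hcard : Fintype.card F = q)
    (H : Set (PGSolid F)) (hne : H.Nonempty) (hI : CondI q H)
    (R : PGPoint F) (hR : Red H R) :
    ∀ π : PGPlane F, R.1 ≤ π.1 → (blackIn q H π.1).ncard = q + 1 :=
  stmt6_general q F hcard H hne hI R hR
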